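/- arXiv:1601.05839 — 2 statements merged into one kernel-verified Lean document; each statement's English description precedes it below -/
import Mathlib

section
/- Let α ∈ (0,1), κ = α^{1/(1-α)}, and let B, R_0, λ_S, N_m, N_f > 0 and C_U > 0. Define R_M(B_S) = (B − B_S)R_0/N_m, R_S(B_S) = (κλ_S B_S R_0 + C_U)/(κN_f), and the separate-service social welfare SW(B_S) = N_m·u(R_M(B_S)) + N_f·u(R_S(B_S)) − (C_U/κ)·R_S(B_S)^{-α} for B_S ∈ [0, B]. Then SW is strictly concave on [0, B], hence has a unique maximizer B_S^{sw}; moreover B_S^{sw} > 0 if and only if C_U < C_U^{sw}, where C_U^{sw} = κ·N_f·B·R_0·((α+1)·λ_S)^{1/α}/N_m. -/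
/-!
`SW` is the mobile welfare `N_m u(R_M)` plus the fixed-user welfare `N_f u(r) - (C_U/κ) r^(-α)`
at `r = R_S`. Both `R_M` and `R_S` are non-constant affine functions of `B_S`, `u` is strictly
concave and `r ↦ r^(-α)` is convex, so `SW` is strictly concave; being continuous on the compact
interval `[0, B]`, it has exactly one maximizer there. A maximizer of a strictly concave function
on `[0, B]` is positive iff the derivative at `0` is positive, and
`SW'(0) = R_0 ((α+1) λ_S R_S(0)^(-α) - R_M(0)^(-α))`, which is positive iff `C_U < C_U^sw`.
-/

open Real Set

theorem StrictConcaveOn.const_mul {𝕜 E : Type*} [Field 𝕜] [LinearOrder 𝕜]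
    [IsStrictOrderedRing 𝕜] [AddCommMonoid E] [SMul 𝕜 E] {s : Set E} {f : E → 𝕜} {c : 𝕜}
    (hf : StrictConcaveOn 𝕜 s f) (hc : 0 < c) : StrictConcaveOn 𝕜 s fun x => c * f x := by
  refine ⟨hf.1, fun x hx y hy hxy a b ha hb hab => ?_⟩
  have := mul_lt_mul_of_pos_left (hf.2 hx hy hxy ha hb hab) hc
  simp only [smul_eq_mul] at this ⊢
  linarith

theorem StrictConcaveOn.comp_affine {𝕜 β : Type*} [Field 𝕜] [LinearOrder 𝕜]
    [IsStrictOrderedRing 𝕜] [AddCommMonoid β] [PartialOrder β] [SMul 𝕜 β] {s t : Set 𝕜}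
    {f : 𝕜 → β} (hf : StrictConcaveOn 𝕜 t f) (hs : Convex 𝕜 s) {g : 𝕜 → 𝕜} {m c : 𝕜}
    (hm : m ≠ 0) (hg : ∀ x, g x = m * x + c) (hst : MapsTo g s t) :
    StrictConcaveOn 𝕜 s fun x => f (g x) := by
  refine ⟨hs, fun x hx y hy hxy a b ha hb hab => ?_⟩
  have hcomb : g (a • x + b • y) = a • g x + b • g y := by
    simp only [hg, smul_eq_mul]
    linear_combination (-c) * hab
  have hne : g x ≠ g y := by simpa [hg, hm] using hxy
  simpa only [hcomb] using hf.2 (hst hx) (hst hy) hne ha hb hab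

theorem StrictConcaveOn.existsUnique_isMaxOn {f : ℝ → ℝ} {s : Set ℝ}
    (hf : StrictConcaveOn ℝ s f) (hs : IsCompact s) (hne : s.Nonempty)
    (hcont : ContinuousOn f s) : ∃! x, x ∈ s ∧ IsMaxOn f s x := by
  obtain ⟨x, hx, hmax⟩ := hs.exists_isMaxOn hne hcont
  exact ⟨x, ⟨hx, hmax⟩, fun y hy => hf.eq_of_isMaxOn hy.2 hmax hy.1 hx⟩

theorem IsMaxOn.hasDerivAt_nonpos_of_left {f : ℝ → ℝ} {a b f' : ℝ} (hab : a < b)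
    (hmax : IsMaxOn f (Icc a b) a) (hf : HasDerivAt f f' a) : f' ≤ 0 := by
  have hcone : b - a ∈ posTangentConeAt (Icc a b) a :=
    sub_mem_posTangentConeAt_of_segment_subset (segment_eq_Icc hab.le).subset
  have := hmax.localize.hasFDerivWithinAt_nonpos hf.hasFDerivAt.hasFDerivWithinAt hcone
  simp only [ContinuousLinearMap.toSpanSingleton_apply, smul_eq_mul] at this
  exact nonpos_of_mul_nonpos_right this (sub_pos.2 hab)

theorem StrictConcaveOn.left_lt_iff_deriv_pos_of_isMaxOn {f : ℝ → ℝ} {a b x f' : ℝ}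
    (hf : StrictConcaveOn ℝ (Icc a b) f) (hab : a < b) (hx : x ∈ Icc a b)
    (hmax : IsMaxOn f (Icc a b) x) (hf' : HasDerivAt f f' a) : a < x ↔ 0 < f' := by
  have ha : a ∈ Icc a b := left_mem_Icc.2 hab.le
  constructor
  · intro hax
    have hslope : 0 ≤ slope f a x := by
      rw [slope_def_field]
      exact div_nonneg (sub_nonneg.2 (hmax ha)) (sub_nonneg.2 hax.le)
    exact hslope.trans_lt (hf.slope_lt_of_hasDerivAt ha hx hax hf')
  · intro hpos
    refine hx.1.lt_of_ne fun hxa => ?_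
    subst hxa
    exact (hmax.hasDerivAt_nonpos_of_left hab hf').not_gt hpos

theorem strictConvexOn_rpow_of_neg {p : ℝ} (hp : p < 0) :
    StrictConvexOn ℝ (Ioi 0) fun x : ℝ => x ^ p := by
  refine strictConvexOn_of_deriv2_pos' (convex_Ioi 0)
    (fun x hx => (continuousAt_rpow_const x p (.inl (ne_of_gt hx))).continuousWithinAt)
    fun x hx => ?_
  rw [iter_deriv_rpow_const, descPochhammer_eval_eq_prod_range]
  simp only [Finset.prod_range_succ, Finset.prod_range_zero, one_mul, Nat.cast_zero,
    Nat.cast_one, Nat.cast_ofNat, sub_zero]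
  exact mul_pos (mul_pos_of_neg_of_neg hp (by linarith)) (rpow_pos_of_pos hx _)

theorem rpow_neg_lt_mul_rpow_neg_iff {α L m s : ℝ} (hα : 0 < α) (hL : 0 < L) (hm : 0 < m)
    (hs : 0 < s) : m ^ (-α) < L * s ^ (-α) ↔ s < L ^ (1 / α) * m := by
  have hpow : (L ^ (1 / α) * m) ^ α = L * m ^ α := by
    rw [mul_rpow (by positivity) hm.le, one_div, rpow_inv_rpow hL.le hα.ne']
  rw [← rpow_lt_rpow_iff hs.le (by positivity) hα, hpow, rpow_neg hm.le, rpow_neg hs.le,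
    ← div_eq_mul_inv, inv_eq_one_div, div_lt_div_iff₀ (by positivity) (by positivity), one_mul]

noncomputable def separateWelfare (α κ B R_0 lamS N_m N_f C_U B_S : ℝ) : ℝ :=
  N_m * (((B - B_S) * R_0 / N_m) ^ (1 - α) / (1 - α))
    + N_f * (((κ * lamS * B_S * R_0 + C_U) / (κ * N_f)) ^ (1 - α) / (1 - α))
    - (C_U / κ) * ((κ * lamS * B_S * R_0 + C_U) / (κ * N_f)) ^ (-α)

section SeparateService

variable {α κ B R_0 lamS N_m N_f C_U : ℝ}

theorem strictConcaveOn_alphaFair (hα0 : 0 < α) (hα1 : α < 1) :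
    StrictConcaveOn ℝ (Ici 0) fun r : ℝ => r ^ (1 - α) / (1 - α) :=
  ((Real.strictConcaveOn_rpow (p := 1 - α) (by linarith) (by linarith)).const_mul
    (inv_pos.2 (sub_pos.2 hα1))).congr fun r _ => by ring

theorem strictConcaveOn_fixedWelfare {N c : ℝ} (hα0 : 0 < α) (hα1 : α < 1) (hN : 0 < N)
    (hc : 0 ≤ c) :
    StrictConcaveOn ℝ (Ioi 0) fun r : ℝ => N * (r ^ (1 - α) / (1 - α)) - c * r ^ (-α) :=
  (((strictConcaveOn_alphaFair hα0 hα1).subset Ioi_subset_Ici_self (convex_Ioi 0)).const_mul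
    hN).sub_convexOn ((strictConvexOn_rpow_of_neg (neg_neg_of_pos hα0)).convexOn.smul hc)

theorem strictConcaveOn_separateWelfare (hα0 : 0 < α) (hα1 : α < 1) (hκ : 0 < κ)
    (hR0 : 0 < R_0) (hlamS : 0 < lamS) (hNm : 0 < N_m) (hNf : 0 < N_f) (hCU : 0 < C_U) :
    StrictConcaveOn ℝ (Icc 0 B) (separateWelfare α κ B R_0 lamS N_m N_f C_U) := by
  have hmobile : StrictConcaveOn ℝ (Icc 0 B)
      fun x => N_m * (((B - x) * R_0 / N_m) ^ (1 - α) / (1 - α)) :=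
    ((strictConcaveOn_alphaFair hα0 hα1).const_mul hNm).comp_affine (convex_Icc 0 B)
      (g := fun x => (B - x) * R_0 / N_m) (m := -(R_0 / N_m)) (c := B * R_0 / N_m)
      (by simp only [ne_eq, neg_eq_zero]; positivity) (fun x => by ring)
      fun x hx => by
        have : 0 ≤ B - x := sub_nonneg.2 hx.2
        show 0 ≤ (B - x) * R_0 / N_m
        positivity
  have hfixed : StrictConcaveOn ℝ (Icc 0 B)
      fun x => N_f * (((κ * lamS * x * R_0 + C_U) / (κ * N_f)) ^ (1 - α) / (1 - α))
        - (C_U / κ) * ((κ * lamS * x * R_0 + C_U) / (κ * N_f)) ^ (-α) :=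
    (strictConcaveOn_fixedWelfare hα0 hα1 hNf (by positivity)).comp_affine (convex_Icc 0 B)
      (g := fun x => (κ * lamS * x * R_0 + C_U) / (κ * N_f)) (m := κ * lamS * R_0 / (κ * N_f))
      (c := C_U / (κ * N_f)) (by positivity) (fun x => by ring)
      fun x hx => by
        have : 0 ≤ x := hx.1
        show 0 < (κ * lamS * x * R_0 + C_U) / (κ * N_f)
        positivity
  exact (hmobile.add hfixed).congr fun x _ => (add_sub_assoc ..).symm

theorem continuousOn_separateWelfare (hα1 : α < 1) (hκ : 0 < κ) (hR0 : 0 < R_0)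
    (hlamS : 0 < lamS) (hNf : 0 < N_f) (hCU : 0 < C_U) :
    ContinuousOn (separateWelfare α κ B R_0 lamS N_m N_f C_U) (Ici 0) := by
  have h1α : 0 ≤ 1 - α := by linarith
  have hS : ∀ x ∈ Ici (0 : ℝ), (κ * lamS * x * R_0 + C_U) / (κ * N_f) ≠ 0 :=
    fun x (hx : 0 ≤ x) => by positivity
  have hSc : ContinuousOn (fun x : ℝ => (κ * lamS * x * R_0 + C_U) / (κ * N_f)) (Ici 0) := by
    fun_prop
  have hMc : ContinuousOn (fun x : ℝ => (B - x) * R_0 / N_m) (Ici 0) := by fun_prop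
  exact ((continuousOn_const.mul ((hMc.rpow_const fun _ _ => .inr h1α).div_const _)).add
    (continuousOn_const.mul ((hSc.rpow_const fun _ _ => .inr h1α).div_const _))).sub
    (continuousOn_const.mul (hSc.rpow_const fun x hx => .inl (hS x hx)))

theorem hasDerivAt_separateWelfare_zero (hα1 : α < 1) (hκ : 0 < κ) (hB : 0 < B)
    (hR0 : 0 < R_0) (hNm : 0 < N_m) (hNf : 0 < N_f) (hCU : 0 < C_U) :
    HasDerivAt (separateWelfare α κ B R_0 lamS N_m N_f C_U)
      (R_0 * ((α + 1) * lamS * (C_U / (κ * N_f)) ^ (-α) - (B * R_0 / N_m) ^ (-α))) 0 := by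
  have hM : HasDerivAt (fun x => (B - x) * R_0 / N_m) (-(R_0 / N_m)) 0 := by
    simpa [neg_div] using (((hasDerivAt_id 0).const_sub B).mul_const R_0).div_const N_m
  have hS : HasDerivAt (fun x => (κ * lamS * x * R_0 + C_U) / (κ * N_f))
      (κ * lamS * R_0 / (κ * N_f)) 0 := by
    simpa using
      ((((hasDerivAt_id 0).const_mul (κ * lamS)).mul_const R_0).add_const C_U).div_const (κ * N_f)
  have hM0 : (0 : ℝ) < (B - 0) * R_0 / N_m := by
    rw [sub_zero]
    positivity
  have hS0 : (0 : ℝ) < (κ * lamS * 0 * R_0 + C_U) / (κ * N_f) := by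
    rw [mul_zero, zero_mul, zero_add]
    positivity
  have h1α : 1 - α ≠ 0 := by linarith
  refine (((((hM.rpow_const (.inl hM0.ne')).div_const (1 - α)).const_mul N_m).add
    (((hS.rpow_const (.inl hS0.ne')).div_const (1 - α)).const_mul N_f)).sub
    ((hS.rpow_const (.inl hS0.ne')).const_mul (C_U / κ))).congr_deriv ?_
  simp only [sub_zero, mul_zero, zero_mul, zero_add, show 1 - α - 1 = -α by ring]
  -- the congestion term contributes `α λ_S R_0 R_S(0)^(-α)` because `C_U / κ = N_f R_S(0)`
  rw [rpow_sub_one (by positivity)]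
  field_simp
  ring

theorem separateWelfare_deriv_zero_pos_iff (hα0 : 0 < α) (hκ : 0 < κ) (hB : 0 < B)
    (hR0 : 0 < R_0) (hlamS : 0 < lamS) (hNm : 0 < N_m) (hNf : 0 < N_f) (hCU : 0 < C_U) :
    0 < R_0 * ((α + 1) * lamS * (C_U / (κ * N_f)) ^ (-α) - (B * R_0 / N_m) ^ (-α)) ↔
      C_U < κ * N_f * B * R_0 * ((α + 1) * lamS) ^ (1 / α) / N_m := by
  rw [mul_pos_iff_of_pos_left hR0, sub_pos,
    rpow_neg_lt_mul_rpow_neg_iff hα0 (by positivity) (by positivity) (by positivity),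
    div_lt_iff₀ (by positivity)]
  ring_nf

end SeparateService

/-- the separate-service social welfare
`SW(B_S) = N_m·u(R_M) + N_f·u(R_S) − (C_U/κ)·R_S^(-α)` is strictly concave on `[0, B]`,
hence has a unique maximizer `B_S^sw`; moreover `B_S^sw > 0` iff
`C_U < C_U^sw = κ·N_f·B·R_0·((α+1)·λ_S)^(1/α)/N_m`. -/
theorem stmt12 (α κ B R_0 lamS N_m N_f C_U : ℝ)
    (hα0 : 0 < α) (hα1 : α < 1) (hκ : κ = α ^ (1 / (1 - α)))
    (hB : 0 < B) (hR0 : 0 < R_0) (hlamS : 0 < lamS) (hNm : 0 < N_m) (hNf : 0 < N_f)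
    (hCU : 0 < C_U) :
    StrictConcaveOn ℝ (Icc 0 B)
      (fun B_S : ℝ =>
        N_m * (((B - B_S) * R_0 / N_m) ^ (1 - α) / (1 - α))
          + N_f * (((κ * lamS * B_S * R_0 + C_U) / (κ * N_f)) ^ (1 - α) / (1 - α))
          - (C_U / κ) * ((κ * lamS * B_S * R_0 + C_U) / (κ * N_f)) ^ (-α)) ∧
    (∃! x : ℝ, x ∈ Icc 0 B ∧
      IsMaxOn (fun B_S : ℝ =>
        N_m * (((B - B_S) * R_0 / N_m) ^ (1 - α) / (1 - α))
          + N_f * (((κ * lamS * B_S * R_0 + C_U) / (κ * N_f)) ^ (1 - α) / (1 - α))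
          - (C_U / κ) * ((κ * lamS * B_S * R_0 + C_U) / (κ * N_f)) ^ (-α)) (Icc 0 B) x) ∧
    (∀ x ∈ Icc (0 : ℝ) B,
      IsMaxOn (fun B_S : ℝ =>
        N_m * (((B - B_S) * R_0 / N_m) ^ (1 - α) / (1 - α))
          + N_f * (((κ * lamS * B_S * R_0 + C_U) / (κ * N_f)) ^ (1 - α) / (1 - α))
          - (C_U / κ) * ((κ * lamS * B_S * R_0 + C_U) / (κ * N_f)) ^ (-α)) (Icc 0 B) x →
      (0 < x ↔ C_U < κ * N_f * B * R_0 * ((α + 1) * lamS) ^ (1 / α) / N_m)) := by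
  have hκ0 : 0 < κ := hκ ▸ rpow_pos_of_pos hα0 _
  set SW := separateWelfare α κ B R_0 lamS N_m N_f C_U
  have hconcave : StrictConcaveOn ℝ (Icc 0 B) SW :=
    strictConcaveOn_separateWelfare hα0 hα1 hκ0 hR0 hlamS hNm hNf hCU
  have hcont : ContinuousOn SW (Icc 0 B) :=
    (continuousOn_separateWelfare hα1 hκ0 hR0 hlamS hNf hCU).mono Icc_subset_Ici_self
  refine ⟨hconcave, hconcave.existsUnique_isMaxOn isCompact_Icc (nonempty_Icc.2 hB.le) hcont,
    fun x hx hmax => ?_⟩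
  rw [hconcave.left_lt_iff_deriv_pos_of_isMaxOn hB hx hmax
    (hasDerivAt_separateWelfare_zero hα1 hκ0 hB hR0 hNm hNf hCU)]
  exact separateWelfare_deriv_zero_pos_iff hα0 hκ0 hB hR0 hlamS hNm hNf hCU
end

section
/- Let α ∈ (0,1) and B, R_0, N_m, N_f > 0 and λ_U > λ_S > 0. The function F(B_M, B_S, B_U) = N_m·u(B_M·R_0/N_m) + N_f·u((λ_S·B_S + λ_U·B_U)·R_0/N_f), maximized over B_M, B_S, B_U ≥ 0 with B_M + B_S + B_U = B, has the unique maximizer B_S = 0, B_M = N_m·B/(N_m + μ_U·N_f), B_U = μ_U·N_f·B/(N_m + μ_U·N_f), where μ_U = λ_U^{1/α − 1}. -/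
/-!
With `β = 1 - α`, each utility `u(r) = r^β / β` is strictly concave with `u'(r) = r^(-α)`, so it lies
strictly below its tangent lines away from the point of tangency. The proposed allocation equalises
the marginal welfare of a unit of bandwidth in the macro cells and in the unlicensed band; this is
exactly where `μ_U = λ_U^(1/α - 1)` comes from. Summing the two tangent inequalities at it, the
first-order terms cancel except for `-(λ_U - λ_S) B_S` times a positive factor, the price of giving
bandwidth to small cells rather than to the more efficient unlicensed network. Hence every other
feasible allocation has strictly smaller welfare.
-/

open Real

lemma rpow_lt_tangent {β s r : ℝ} (hβ0 : 0 < β) (hβ1 : β < 1) (hs : 0 < s) (hr : 0 ≤ r)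
    (hrs : r ≠ s) : r ^ β < s ^ β + β * s ^ (β - 1) * (r - s) := by
  have hbern := rpow_one_add_lt_one_add_mul_self (s := r / s - 1)
    (by linarith [div_nonneg hr hs.le]) (sub_ne_zero.2 (div_ne_one_of_ne hrs)) hβ0 hβ1
  rw [add_sub_cancel, div_rpow hr hs.le] at hbern
  have hsβ : 0 < s ^ β := rpow_pos_of_pos hs β
  calc r ^ β = s ^ β * (r ^ β / s ^ β) := by field_simp
    _ < s ^ β * (1 + β * (r / s - 1)) := mul_lt_mul_of_pos_left hbern hsβ
    _ = s ^ β + β * s ^ (β - 1) * (r - s) := by rw [rpow_sub_one hs.ne']; field_simp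

noncomputable def alphaFair (α r : ℝ) : ℝ := r ^ (1 - α) / (1 - α)

section AlphaFair

variable {α : ℝ}

lemma alphaFair_lt_tangent (hα0 : 0 < α) (hα1 : α < 1) {s r : ℝ} (hs : 0 < s) (hr : 0 ≤ r)
    (hrs : r ≠ s) : alphaFair α r < alphaFair α s + s ^ (-α) * (r - s) := by
  have h1α : 0 < 1 - α := by linarith
  have h := rpow_lt_tangent h1α (by linarith) hs hr hrs
  rw [show 1 - α - 1 = -α by ring] at h
  calc alphaFair α r < (s ^ (1 - α) + (1 - α) * s ^ (-α) * (r - s)) / (1 - α) :=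
        div_lt_div_of_pos_right h h1α
    _ = alphaFair α s + s ^ (-α) * (r - s) := by unfold alphaFair; field_simp

lemma mul_alphaFair_div_lt_tangent (hα0 : 0 < α) (hα1 : α < 1) {N R c p : ℝ} (hN : 0 < N)
    (hR : 0 < R) (hp : 0 < p) (hc : 0 ≤ c) (hcp : c ≠ p) :
    N * alphaFair α (c * R / N) < N * alphaFair α (p * R / N) + R * (p * R / N) ^ (-α) * (c - p) := by
  have hne : c * R / N ≠ p * R / N := by
    rwa [Ne, div_left_inj' hN.ne', mul_left_inj' hR.ne']
  calc N * alphaFair α (c * R / N)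
      < N * (alphaFair α (p * R / N) + (p * R / N) ^ (-α) * (c * R / N - p * R / N)) :=
        mul_lt_mul_of_pos_left (alphaFair_lt_tangent hα0 hα1 (by positivity) (by positivity) hne) hN
    _ = N * alphaFair α (p * R / N) + R * (p * R / N) ^ (-α) * (c - p) := by field_simp

lemma mul_alphaFair_div_le_tangent (hα0 : 0 < α) (hα1 : α < 1) {N R c p : ℝ} (hN : 0 < N)
    (hR : 0 < R) (hp : 0 < p) (hc : 0 ≤ c) :
    N * alphaFair α (c * R / N) ≤ N * alphaFair α (p * R / N) + R * (p * R / N) ^ (-α) * (c - p) := by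
  rcases eq_or_ne c p with rfl | hcp
  · simp
  · exact (mul_alphaFair_div_lt_tangent hα0 hα1 hN hR hp hc hcp).le

end AlphaFair

noncomputable def welfare (α R₀ Nm Nf lamS lamU bM bS bU : ℝ) : ℝ :=
  Nm * alphaFair α (bM * R₀ / Nm) + Nf * alphaFair α ((lamS * bS + lamU * bU) * R₀ / Nf)

section Welfare

variable {α R₀ Nm Nf lamS lamU p q cM cS cU : ℝ}
  (hα0 : 0 < α) (hα1 : α < 1) (hR₀ : 0 < R₀) (hNm : 0 < Nm) (hNf : 0 < Nf)
  (hlamS : 0 ≤ lamS) (hlam : lamS < lamU) (hp : 0 < p) (hq : 0 < q)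
  (hmarg : (p * R₀ / Nm) ^ (-α) = lamU * (lamU * q * R₀ / Nf) ^ (-α))
  (hcM : 0 ≤ cM) (hcS : 0 ≤ cS) (hcU : 0 ≤ cU) (hsum : cM + cS + cU = p + q)
include hα0 hα1 hR₀ hNm hNf hlamS hlam hp hq hmarg hcM hcS hcU hsum

theorem welfare_lt_of_marginal_eq (hne : cM ≠ p ∨ cS ≠ 0) :
    welfare α R₀ Nm Nf lamS lamU cM cS cU < welfare α R₀ Nm Nf lamS lamU p 0 q := by
  have hlamU : 0 < lamU := hlamS.trans_lt hlam
  set sF := lamU * q * R₀ / Nf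
  have hF := mul_alphaFair_div_le_tangent hα0 hα1 hNf hR₀ (mul_pos hlamU hq)
    (c := lamS * cS + lamU * cU) (by positivity)
  have hfirst_order : R₀ * (p * R₀ / Nm) ^ (-α) * (cM - p)
      + R₀ * sF ^ (-α) * (lamS * cS + lamU * cU - lamU * q)
      = -(R₀ * sF ^ (-α) * ((lamU - lamS) * cS)) := by
    rw [hmarg]; linear_combination (R₀ * sF ^ (-α) * lamU) * hsum
  have hsF : 0 < R₀ * sF ^ (-α) := by positivity
  unfold welfare
  rw [mul_zero, zero_add]
  rcases hne with hcp | hcS0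
  · have hM := mul_alphaFair_div_lt_tangent hα0 hα1 hNm hR₀ hp hcM hcp
    linarith [mul_nonneg hsF.le (mul_nonneg (sub_nonneg.2 hlam.le) hcS)]
  · have hM := mul_alphaFair_div_le_tangent hα0 hα1 hNm hR₀ hp hcM
    linarith [mul_pos hsF (mul_pos (sub_pos.2 hlam) (lt_of_le_of_ne hcS (Ne.symm hcS0)))]

theorem welfare_le_of_marginal_eq :
    welfare α R₀ Nm Nf lamS lamU cM cS cU ≤ welfare α R₀ Nm Nf lamS lamU p 0 q := by
  by_cases hopt : cM = p ∧ cS = 0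
  · obtain ⟨rfl, rfl⟩ := hopt
    obtain rfl : cU = q := by linarith
    rfl
  · rw [not_and_or] at hopt
    exact (welfare_lt_of_marginal_eq hα0 hα1 hR₀ hNm hNf hlamS hlam hp hq hmarg hcM hcS hcU hsum
      hopt).le

end Welfare

theorem marginal_eq_at_optimum {α B R₀ Nm Nf lamU μ : ℝ} (hα0 : 0 < α) (hB : 0 ≤ B) (hR₀ : 0 ≤ R₀)
    (hNm : 0 < Nm) (hNf : 0 < Nf) (hlamU : 0 < lamU) (hμ_def : μ = lamU ^ (1 / α - 1)) :
    (Nm * B / (Nm + μ * Nf) * R₀ / Nm) ^ (-α)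
      = lamU * (lamU * (μ * Nf * B / (Nm + μ * Nf)) * R₀ / Nf) ^ (-α) := by
  have hμ : 0 < μ := hμ_def ▸ rpow_pos_of_pos hlamU _
  set t := B * R₀ / (Nm + μ * Nf) with ht_def
  have ht : 0 ≤ t := by positivity
  have hM : Nm * B / (Nm + μ * Nf) * R₀ / Nm = t := by rw [ht_def]; field_simp
  have hF : lamU * (μ * Nf * B / (Nm + μ * Nf)) * R₀ / Nf = lamU * μ * t := by
    rw [ht_def]; field_simp
  have hμα : (lamU * μ) ^ (-α) = lamU⁻¹ := by
    rw [hμ_def, ← rpow_one_add' hlamU.le (by rw [add_sub_cancel]; positivity),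
      ← rpow_mul hlamU.le, ← rpow_neg_one]
    congr 1
    field_simp
    ring
  rw [hM, hF, mul_rpow (by positivity) ht, hμα, ← mul_assoc, mul_inv_cancel₀ hlamU.ne', one_mul]

/-- when `λ_U > λ_S`, the social-planner welfare
`F(B_M, B_S, B_U) = N_m·u(B_M·R_0/N_m) + N_f·u((λ_S·B_S + λ_U·B_U)·R_0/N_f)`,
maximized over nonnegative allocations summing to `B`, has the unique maximizer
`B_S = 0`, `B_M = N_m·B/(N_m + μ_U·N_f)`, `B_U = μ_U·N_f·B/(N_m + μ_U·N_f)`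
with `μ_U = λ_U^(1/α − 1)`. -/
theorem stmt18 (α B R_0 N_m N_f lamS lamU : ℝ)
    (hα0 : 0 < α) (hα1 : α < 1)
    (hB : 0 < B) (hR0 : 0 < R_0) (hNm : 0 < N_m) (hNf : 0 < N_f)
    (hlamS : 0 < lamS) (hlam : lamS < lamU) :
    ∀ bM bS bU : ℝ,
      (0 ≤ bM ∧ 0 ≤ bS ∧ 0 ≤ bU ∧ bM + bS + bU = B ∧
        ∀ cM cS cU : ℝ, 0 ≤ cM → 0 ≤ cS → 0 ≤ cU → cM + cS + cU = B →
          N_m * ((cM * R_0 / N_m) ^ (1 - α) / (1 - α))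
              + N_f * (((lamS * cS + lamU * cU) * R_0 / N_f) ^ (1 - α) / (1 - α))
            ≤ N_m * ((bM * R_0 / N_m) ^ (1 - α) / (1 - α))
              + N_f * (((lamS * bS + lamU * bU) * R_0 / N_f) ^ (1 - α) / (1 - α)))
      ↔ (bS = 0 ∧
         bM = N_m * B / (N_m + lamU ^ (1 / α - 1) * N_f) ∧
         bU = lamU ^ (1 / α - 1) * N_f * B / (N_m + lamU ^ (1 / α - 1) * N_f)) := by
  intro bM bS bU
  have hlamU : 0 < lamU := hlamS.trans hlam
  set μ := lamU ^ (1 / α - 1) with hμ_def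
  have hμ : 0 < μ := rpow_pos_of_pos hlamU _
  set p := N_m * B / (N_m + μ * N_f) with hp_def
  set q := μ * N_f * B / (N_m + μ * N_f) with hq_def
  have hp : 0 < p := by positivity
  have hq : 0 < q := by positivity
  have hpq : p + q = B := by rw [hp_def, hq_def]; field_simp
  have hmarg := marginal_eq_at_optimum hα0 hB.le hR0.le hNm hNf hlamU hμ_def
  constructor
  · rintro ⟨hbM, hbS, hbU, hsum, hmax⟩
    by_contra hne
    have hlt := welfare_lt_of_marginal_eq hα0 hα1 hR0 hNm hNf hlamS.le hlam hp hq hmarg hbM hbS hbU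
      (hsum.trans hpq.symm) (by by_contra! h; exact hne ⟨h.2, h.1, by linarith⟩)
    have hle : welfare α R_0 N_m N_f lamS lamU p 0 q ≤ welfare α R_0 N_m N_f lamS lamU bM bS bU :=
      hmax p 0 q hp.le le_rfl hq.le (by rw [add_zero, hpq])
    exact hle.not_gt hlt
  · rintro ⟨rfl, rfl, rfl⟩
    exact ⟨hp.le, le_rfl, hq.le, by rw [add_zero, hpq], fun cM cS cU hcM hcS hcU hsum =>
      welfare_le_of_marginal_eq hα0 hα1 hR0 hNm hNf hlamS.le hlam hp hq hmarg hcM hcS hcU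
        (hsum.trans hpq.symm)⟩
end
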